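/- Let 2 ≤ m < n and let G ≤ SL(m,ℝ) be a subgroup whose standard action on ℝ^m is irreducible and which has scalar commutant. Then the centralizer of ι_J(G) in SL(n,ℝ) is exactly the set of block-diagonal matrices diag(a·I_m, S) with a ∈ ℝ, S an (n−m)×(n−m) real matrix, and a^m·det(S) = 1. -/

import Mathlib

open Matrix
open scoped Pointwise

abbrev SLR (n : ℕ) : Type := Matrix.SpecialLinearGroup (Fin n) ℝ

instance (n : ℕ) : TopologicalSpace (SLR n) :=
  TopologicalSpace.induced (fun g => (g : Matrix (Fin n) (Fin n) ℝ)) inferInstance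

/-- The index identification `Fin m ⊕ Fin (n-m) ≃ Fin n`. -/
def finBlockEquiv {m n : ℕ} (h : m ≤ n) : Fin m ⊕ Fin (n - m) ≃ Fin n :=
  finSumFinEquiv.trans (finCongr (Nat.add_sub_cancel' h))

/-- Upper-left block embedding `SL(m,ℝ) →* SL(n,ℝ)`, `g ↦ diag(g, I_{n-m})`. -/
noncomputable def iotaJ {m n : ℕ} (h : m ≤ n) : SLR m →* SLR n where
  toFun g :=
    ⟨(Matrix.reindex (finBlockEquiv h) (finBlockEquiv h))
        (Matrix.fromBlocks (g : Matrix (Fin m) (Fin m) ℝ) 0 0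
          (1 : Matrix (Fin (n - m)) (Fin (n - m)) ℝ)), by
      simp [Matrix.det_fromBlocks_zero₂₁]⟩
  map_one' := by
    apply Subtype.ext
    simp [Matrix.fromBlocks_one]
  map_mul' g₁ g₂ := by
    apply Subtype.ext
    show _ = (_ : Matrix (Fin n) (Fin n) ℝ) * _
    simp only [Matrix.SpecialLinearGroup.coe_mul, Matrix.reindex_apply]
    rw [Matrix.submatrix_mul_equiv _ _ _ ((finBlockEquiv h).symm) _,
      Matrix.fromBlocks_multiply]
    simp

/-!
Write a matrix commuting with `ι_J(G)` in blocks `[[A, B], [C, D]]` along `ℝ^m ⊕ ℝ^(n-m)`.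
Commuting with `diag(g, 1)` means `g A = A g`, `g B = B` and `C g = C`, so `A` is scalar.
The columns of `B` are `G`-fixed vectors, and `C` kills the span of all `g w - w`. Both subspaces
are `G`-invariant, and `G` is nontrivial because for `m ≥ 2` the commutant of the trivial group
is not scalar; so irreducibility makes the fixed subspace `0` and the span everything,
i.e. `B = 0` and `C = 0`.
-/

namespace Matrix

theorem commute_fromBlocks_one_iff {ι κ R : Type*} [Fintype ι] [Fintype κ] [DecidableEq κ]
    [Semiring R] {g : Matrix ι ι R} {M : Matrix (ι ⊕ κ) (ι ⊕ κ) R} :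
    Commute (fromBlocks g 0 0 1) M ↔
      Commute g M.toBlocks₁₁ ∧ g * M.toBlocks₁₂ = M.toBlocks₁₂ ∧
        M.toBlocks₂₁ * g = M.toBlocks₂₁ := by
  conv_lhs => rw [commute_iff_eq, ← fromBlocks_toBlocks M]
  simp [fromBlocks_multiply, fromBlocks_inj, commute_iff_eq, eq_comm (a := M.toBlocks₂₁)]

namespace SpecialLinearGroup

variable {ι κ R : Type*} [Fintype ι] [DecidableEq ι] [CommRing R]
  (G : Subgroup (SpecialLinearGroup ι R))

def IsIrreducible : Prop :=
  ∀ W : Submodule R (ι → R), (∀ g ∈ G, ∀ v ∈ W, (g : Matrix ι ι R) *ᵥ v ∈ W) → W = ⊥ ∨ W = ⊤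

def HasScalarCommutant : Prop :=
  ∀ X : Matrix ι ι R, (∀ g ∈ G, X * (g : Matrix ι ι R) = (g : Matrix ι ι R) * X) →
    ∃ a : R, X = a • (1 : Matrix ι ι R)

def fixedSubmodule : Submodule R (ι → R) where
  carrier := {v | ∀ g ∈ G, (g : Matrix ι ι R) *ᵥ v = v}
  add_mem' hv hw g hg := by simp [mulVec_add, hv g hg, hw g hg]
  zero_mem' g hg := by simp
  smul_mem' c v hv g hg := by simp [mulVec_smul, hv g hg]

def coinvariantSpan : Submodule R (ι → R) :=
  Submodule.span R {v | ∃ g ∈ G, ∃ w, v = (g : Matrix ι ι R) *ᵥ w - w}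

variable {G}

theorem mulVec_mem_fixedSubmodule {g : SpecialLinearGroup ι R} (hg : g ∈ G) {v : ι → R}
    (hv : v ∈ fixedSubmodule G) : (g : Matrix ι ι R) *ᵥ v ∈ fixedSubmodule G := by
  rwa [hv g hg]

theorem mulVec_mem_coinvariantSpan {g : SpecialLinearGroup ι R} (hg : g ∈ G) {v : ι → R}
    (hv : v ∈ coinvariantSpan G) : (g : Matrix ι ι R) *ᵥ v ∈ coinvariantSpan G := by
  suffices coinvariantSpan G ≤ (coinvariantSpan G).comap (g : Matrix ι ι R).mulVecLin from
    this hv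
  refine Submodule.span_le.2 ?_
  rintro _ ⟨h, hh, w, rfl⟩
  have expand : (g : Matrix ι ι R) *ᵥ ((h : Matrix ι ι R) *ᵥ w - w) =
      (((g * h : SpecialLinearGroup ι R) : Matrix ι ι R) *ᵥ w - w) -
        ((g : Matrix ι ι R) *ᵥ w - w) := by
    simp [mulVec_sub, mulVec_mulVec]
  simp only [SetLike.mem_coe, Submodule.mem_comap, mulVecLin_apply, expand]
  exact sub_mem (Submodule.subset_span ⟨g * h, mul_mem hg hh, w, rfl⟩)
    (Submodule.subset_span ⟨g, hg, w, rfl⟩)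

theorem eq_one_of_forall_mulVec_eq_self {g : SpecialLinearGroup ι R}
    (hg : ∀ v, (g : Matrix ι ι R) *ᵥ v = v) : g = 1 :=
  Subtype.ext <| mulVec_injective <| funext fun v => by simp [hg v]

theorem eq_bot_of_fixedSubmodule_eq_top (h : fixedSubmodule G = ⊤) : G = ⊥ :=
  (Subgroup.eq_bot_iff_forall G).2 fun g hg =>
    eq_one_of_forall_mulVec_eq_self fun v => (h ▸ Submodule.mem_top : v ∈ fixedSubmodule G) g hg

theorem eq_bot_of_coinvariantSpan_eq_bot (h : coinvariantSpan G = ⊥) : G = ⊥ :=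
  (Subgroup.eq_bot_iff_forall G).2 fun g hg => eq_one_of_forall_mulVec_eq_self fun v => by
    have hmem : (g : Matrix ι ι R) *ᵥ v - v ∈ coinvariantSpan G :=
      Submodule.subset_span ⟨g, hg, v, rfl⟩
    rwa [h, Submodule.mem_bot, sub_eq_zero] at hmem

theorem ne_bot_of_commutant_scalar [Nontrivial ι] [Nontrivial R]
    (hcomm : HasScalarCommutant G) : G ≠ ⊥ := by
  rintro rfl
  obtain ⟨i, j, hij⟩ := exists_pair_ne ι
  obtain ⟨a, ha⟩ := hcomm (single i j 1) fun g hg => by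
    rw [(Subgroup.mem_bot.1 hg : g = 1)]
    simp
  simpa [hij] using congrFun (congrFun ha i) j

theorem eq_zero_of_forall_coe_mul_eq_self (hirr : IsIrreducible G) (hG : G ≠ ⊥) {B : Matrix ι κ R}
    (hB : ∀ g ∈ G, (g : Matrix ι ι R) * B = B) : B = 0 := by
  have hfix : fixedSubmodule G = ⊥ :=
    (hirr _ fun _ hg _ => mulVec_mem_fixedSubmodule hg).resolve_right
      (mt eq_bot_of_fixedSubmodule_eq_top hG)
  ext i j
  have hcol : (fun i => B i j) ∈ fixedSubmodule G := fun g hg => by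
    conv_rhs => rw [← hB g hg]
    ext i
    simp [mul_apply, mulVec, dotProduct]
  rw [hfix, Submodule.mem_bot] at hcol
  simpa using congrFun hcol i

theorem eq_zero_of_forall_mul_coe_eq_self (hirr : IsIrreducible G) (hG : G ≠ ⊥) {C : Matrix κ ι R}
    (hC : ∀ g ∈ G, C * (g : Matrix ι ι R) = C) : C = 0 := by
  have hspan : coinvariantSpan G = ⊤ :=
    (hirr _ fun _ hg _ => mulVec_mem_coinvariantSpan hg).resolve_left
      (mt eq_bot_of_coinvariantSpan_eq_bot hG)
  have hker : coinvariantSpan G ≤ LinearMap.ker C.mulVecLin := by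
    refine Submodule.span_le.2 ?_
    rintro _ ⟨g, hg, w, rfl⟩
    simp [mulVec_sub, mulVec_mulVec, hC g hg]
  refine mulVec_injective <| funext fun v => ?_
  simpa using hker (hspan ▸ Submodule.mem_top : v ∈ coinvariantSpan G)

end SpecialLinearGroup

end Matrix

theorem coe_iotaJ {m n : ℕ} (h : m ≤ n) (g : SLR m) :
    (iotaJ h g : Matrix (Fin n) (Fin n) ℝ) =
      reindex (finBlockEquiv h) (finBlockEquiv h)
        (fromBlocks (g : Matrix (Fin m) (Fin m) ℝ) 0 0 1) :=
  rfl

theorem mem_centralizer_map_iotaJ_iff {m n : ℕ} (h : m ≤ n) (G : Subgroup (SLR m)) (x : SLR n) :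
    x ∈ Subgroup.centralizer (G.map (iotaJ h) : Set (SLR n)) ↔
      ∀ g ∈ G, Commute (fromBlocks (g : Matrix (Fin m) (Fin m) ℝ) 0 0 1)
        ((x : Matrix (Fin n) (Fin n) ℝ).submatrix (finBlockEquiv h) (finBlockEquiv h)) := by
  set f := reindexAlgEquiv ℝ ℝ (finBlockEquiv h)
  simp only [Subgroup.mem_centralizer_iff, Subgroup.coe_map, Set.mem_image, SetLike.mem_coe,
    forall_exists_index, and_imp, forall_apply_eq_imp_iff₂]
  refine forall₂_congr fun g _ => ?_
  rw [← commute_iff_eq, ← commute_map_iff SpecialLinearGroup.coeMonoidHom_injective,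
    SpecialLinearGroup.coeMonoidHom_apply, SpecialLinearGroup.coeMonoidHom_apply,
    ← commute_map_iff f.symm.injective, coe_iotaJ]
  simp [f]

/-- the centralizer of `ι_J(G)` in `SL(n,ℝ)`, for `G ≤ SL(m,ℝ)` acting
irreducibly on `ℝ^m` with scalar commutant, is exactly the set of block-diagonal
matrices `diag(a·I_m, S)` with `a^m · det S = 1`. -/
theorem centralizer_of_image (m n : ℕ) (hm : 2 ≤ m) (hmn : m < n)
    (G : Subgroup (SLR m))
    (hirr : ∀ W : Submodule ℝ (Fin m → ℝ),
      (∀ g ∈ G, ∀ v ∈ W, (g : Matrix (Fin m) (Fin m) ℝ) *ᵥ v ∈ W) → W = ⊥ ∨ W = ⊤)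
    (hcomm : ∀ X : Matrix (Fin m) (Fin m) ℝ,
      (∀ g ∈ G, X * (g : Matrix (Fin m) (Fin m) ℝ) = (g : Matrix (Fin m) (Fin m) ℝ) * X) →
      ∃ a : ℝ, X = a • (1 : Matrix (Fin m) (Fin m) ℝ)) :
    ((Subgroup.centralizer ((G.map (iotaJ hmn.le) : Subgroup (SLR n)) : Set (SLR n))) :
        Set (SLR n)) =
      { x : SLR n | ∃ (a : ℝ) (S : Matrix (Fin (n - m)) (Fin (n - m)) ℝ),
          a ^ m * S.det = 1 ∧
          (x : Matrix (Fin n) (Fin n) ℝ) =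
            (Matrix.reindex (finBlockEquiv hmn.le) (finBlockEquiv hmn.le))
              (Matrix.fromBlocks (a • (1 : Matrix (Fin m) (Fin m) ℝ)) 0 0 S) } := by
  set e := finBlockEquiv hmn.le
  have : Nontrivial (Fin m) := Fin.nontrivial_iff_two_le.2 hm
  have hG := SpecialLinearGroup.ne_bot_of_commutant_scalar hcomm
  ext x
  rw [SetLike.mem_coe, mem_centralizer_map_iotaJ_iff]
  set M := (x : Matrix (Fin n) (Fin n) ℝ).submatrix e e
  have hxM : (x : Matrix (Fin n) (Fin n) ℝ) = reindex e e M := by simp [M]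
  simp only [commute_fromBlocks_one_iff, Set.mem_ofPred_eq]
  constructor
  · intro hM
    obtain ⟨a, hA⟩ := hcomm M.toBlocks₁₁ fun g hg => (hM g hg).1.eq.symm
    have hB := SpecialLinearGroup.eq_zero_of_forall_coe_mul_eq_self hirr hG fun g hg =>
      (hM g hg).2.1
    have hC := SpecialLinearGroup.eq_zero_of_forall_mul_coe_eq_self hirr hG fun g hg =>
      (hM g hg).2.2
    have hMblocks : M = fromBlocks (a • 1) 0 0 M.toBlocks₂₂ := by
      rw [← hA, ← hB, ← hC, fromBlocks_toBlocks]
    refine ⟨a, M.toBlocks₂₂, ?_, hMblocks ▸ hxM⟩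
    have hdet : (x : Matrix (Fin n) (Fin n) ℝ).det = 1 := x.2
    rw [hxM, det_reindex_self, hMblocks] at hdet
    simpa [det_fromBlocks_zero₂₁, det_smul] using hdet
  · rintro ⟨a, S, -, hxS⟩ g -
    have hMS : M = fromBlocks (a • 1) 0 0 S := by simp [M, hxS, e]
    simpa [hMS] using (Commute.one_right _).smul_right a
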